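/- For every natural number n and every natural number s ≥ 1, ∑_{k=0}^{n} H_{n−k} / ((k+s)(k+1+s)) = ((n+1)/(s(n+1+s))) · H_{n+1} − (H_{n+s} − H_{s−1}) / (n+1+s), as an identity of real numbers. -/

import Mathlib

/-!
Replace `s` by an arbitrary real shift `x` (avoiding the poles `0, -1, -2, …`) and
`H (n + s) - H (s - 1)` by `∑_{j ≤ n} 1 / (j + x)`. Splitting off the term `k = 0` turns the
sum for `n + 1` and `x` into the sum for `n` and `x + 1`, so the identity follows by induction
on `n` with `x` generalized; the induction step is a rational-function identity.
-/

open Finset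

noncomputable def H : ℕ → ℝ := fun m => ∑ j ∈ range m, (1 : ℝ) / (j + 1)

lemma H_zero : H 0 = 0 := by
  simp [H]

lemma H_succ (m : ℕ) : H (m + 1) = H m + 1 / (m + 1) := by
  simp [H, sum_range_succ]

lemma H_add (a b : ℕ) : H (a + b) = H a + ∑ j ∈ range b, 1 / ((a : ℝ) + j + 1) := by
  simp only [H, sum_range_add, Nat.cast_add, add_assoc]

lemma H_add_sub_H_pred {s : ℕ} (hs : 1 ≤ s) (n : ℕ) :
    H (n + s) - H (s - 1) = ∑ j ∈ range (n + 1), 1 / ((j : ℝ) + s) := by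
  obtain ⟨t, rfl⟩ := Nat.exists_eq_add_of_le' hs
  rw [show n + (t + 1) = t + (n + 1) by omega, Nat.add_sub_cancel, H_add]
  push_cast
  ring_nf

lemma sum_H_rev_div_consecutive_mul (n : ℕ) {x : ℝ} (hx : ∀ k : ℕ, (k : ℝ) + x ≠ 0) :
    ∑ k ∈ range (n + 1), H (n - k) / (((k : ℝ) + x) * ((k : ℝ) + 1 + x)) =
      (((n : ℝ) + 1) / (x * ((n : ℝ) + 1 + x))) * H (n + 1) -
        (∑ j ∈ range (n + 1), 1 / ((j : ℝ) + x)) / ((n : ℝ) + 1 + x) := by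
  induction n generalizing x with
  | zero =>
    have h0 : x ≠ 0 := by simpa using hx 0
    have h1 : 1 + x ≠ 0 := by simpa using hx 1
    simp only [sum_range_one, Nat.sub_self, zero_add, H_succ, H_zero, Nat.cast_zero]
    field_simp
    ring
  | succ n ih =>
    have hx' : ∀ k : ℕ, (k : ℝ) + (x + 1) ≠ 0 := fun k => by
      convert hx (k + 1) using 1; push_cast; ring
    have h0 : x ≠ 0 := by simpa using hx 0
    have h1 : x + 1 ≠ 0 := by simpa [add_comm] using hx 1
    have hn : (n : ℝ) + 1 + (x + 1) ≠ 0 := by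
      convert hx (n + 2) using 1; push_cast; ring
    have peel_lhs : ∑ k ∈ range (n + 2), H (n + 1 - k) / (((k : ℝ) + x) * ((k : ℝ) + 1 + x)) =
        ∑ k ∈ range (n + 1), H (n - k) / (((k : ℝ) + (x + 1)) * ((k : ℝ) + 1 + (x + 1))) +
          H (n + 1) / (x * (x + 1)) := by
      rw [sum_range_succ']
      push_cast
      simp only [zero_add]
      congr 1
      · exact sum_congr rfl fun k _ => by ring_nf
      · ring
    have peel_rhs : ∑ j ∈ range (n + 2), 1 / ((j : ℝ) + x) =
        ∑ j ∈ range (n + 1), 1 / ((j : ℝ) + (x + 1)) + 1 / x := by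
      rw [sum_range_succ']
      push_cast
      simp only [zero_add]
      congr 1
      exact sum_congr rfl fun j _ => by ring_nf
    rw [peel_lhs, peel_rhs, ih hx', H_succ (n + 1)]
    generalize H (n + 1) = h
    generalize ∑ j ∈ range (n + 1), 1 / ((j : ℝ) + (x + 1)) = S
    push_cast
    rw [show (n : ℝ) + 1 + 1 + x = n + 1 + (x + 1) by ring]
    field_simp
    ring

theorem stmt_10 (n : ℕ) (s : ℕ) (hs : 1 ≤ s) :
    ∑ k ∈ range (n + 1), H (n - k) / (((k : ℝ) + s) * ((k : ℝ) + 1 + s)) =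
      (((n : ℝ) + 1) / ((s : ℝ) * ((n : ℝ) + 1 + s))) * H (n + 1) -
        (H (n + s) - H (s - 1)) / ((n : ℝ) + 1 + s) := by
  rw [H_add_sub_H_pred hs]
  exact sum_H_rev_div_consecutive_mul n fun k => by positivity
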